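/- arXiv:1004.2713 — 7 statements merged into one kernel-verified Lean document; each statement's English description precedes it below -/
import Mathlib

section
/- Let K be a field with char(K) ≠ 2,3, and σ₁, σ₂ ∈ K. Define f(x) = x³ - σ₁x² + σ₂x - (σ₁-2), P(z) = 2z² + (2-σ₁)z + (2-σ₁), Q(z) = -z² + (2+σ₁)z + (2-σ₁-σ₂). If λ ∈ K satisfies f(λ) = 0 and Q(λ) ≠ 0, then the derivative of the rational function φ(z) = P(z)/Q(z) at z = λ equals λ; i.e., (P'(λ)Q(λ) - P(λ)Q'(λ))/Q(λ)² = λ. -/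
/-- If λ is a root of the multiplier cubic and Q(λ) ≠ 0, then the derivative of
φ = P/Q at λ equals λ. -/
theorem stmt1 (K : Type*) [Field K] (h2 : (2 : K) ≠ 0) (h3 : (3 : K) ≠ 0)
    (σ₁ σ₂ lam : K)
    (hf : lam ^ 3 - σ₁ * lam ^ 2 + σ₂ * lam - (σ₁ - 2) = 0)
    (hQ : -lam ^ 2 + (2 + σ₁) * lam + (2 - σ₁ - σ₂) ≠ 0) :
    ((4 * lam + (2 - σ₁)) * (-lam ^ 2 + (2 + σ₁) * lam + (2 - σ₁ - σ₂))
        - (2 * lam ^ 2 + (2 - σ₁) * lam + (2 - σ₁)) * (-2 * lam + (2 + σ₁)))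
      / (-lam ^ 2 + (2 + σ₁) * lam + (2 - σ₁ - σ₂)) ^ 2 = lam := by
  rw [div_eq_iff (pow_ne_zero 2 hQ)]
  linear_combination (-(lam ^ 2) + (4 + σ₁) * lam - (2 * σ₁ + σ₂)) * hf
end

section
/- Let K be a field with char(K) ≠ 2,3, and σ₁, σ₂ ∈ K. Define f(x) = x³ - σ₁x² + σ₂x - (σ₁-2) and Q(z) = -z² + (2+σ₁)z + (2-σ₁-σ₂). If λ ∈ K satisfies both f(λ) = 0 and Q(λ) = 0, then f'(λ) = 0, i.e., 3λ² - 2σ₁λ + σ₂ = 0; hence λ is a multiple root of f. -/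
/-- If λ is a common root of the multiplier cubic f and of the denominator Q of
the normal form, then f'(λ) = 0, so λ is a multiple root of f. -/
theorem stmt2 (K : Type*) [Field K] (h2 : (2 : K) ≠ 0) (h3 : (3 : K) ≠ 0)
    (σ₁ σ₂ lam : K)
    (hf : lam ^ 3 - σ₁ * lam ^ 2 + σ₂ * lam - (σ₁ - 2) = 0)
    (hQ : -lam ^ 2 + (2 + σ₁) * lam + (2 - σ₁ - σ₂) = 0) :
    3 * lam ^ 2 - 2 * σ₁ * lam + σ₂ = 0 := by
  linear_combination hf + (lam - 1) * hQ
end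

section
/- Let K be a field with char(K) ≠ 2,3, d ∈ K* a nonsquare or square, and suppose √d ∈ K̄. Let α ∈ K̄* with α³ ≠ 1, and set g(z) = α(z - √d)/(z + √d). Then g⁻¹ ∘ (1/z²) ∘ g equals the rational map (√d·μ·z² - 2dz + d√d·μ)/(z² - 2√d·μ·z + d), where μ = (α³+1)/(α³-1). -/
/-!
Write the candidate map as `N / Q`. Because `s ^ 2 = d`, the two combinations entering
`g (N / Q)` are perfect squares: `N - s Q = s (μ - 1) (z + s) ^ 2` and
`N + s Q = s (μ + 1) (z - s) ^ 2`, and the choice of `μ` makes `μ + 1 = α ^ 3 (μ - 1)`.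
Hence `g (N / Q) = α (z + s) ^ 2 / (α ^ 3 (z - s) ^ 2) = 1 / (g z) ^ 2`.
-/

section Field

variable {L : Type*} [Field L]

lemma mul_div_sub_div_add_eq {Q : L} (hQ : Q ≠ 0) (α N s : L) :
    α * (N / Q - s) / (N / Q + s) = α * (N - s * Q) / (N + s * Q) := by
  rw [div_sub' hQ, div_add' _ _ _ hQ, ← mul_div_assoc, div_div_div_cancel_right₀ hQ,
    mul_comm Q s]

lemma add_one_eq_mul_sub_one_of_eq_div {c μ : L} (hc : c ≠ 1) (hμ : μ = (c + 1) / (c - 1)) :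
    μ + 1 = c * (μ - 1) := by
  have hc' : c - 1 ≠ 0 := sub_ne_zero.mpr hc
  subst hμ
  field_simp
  ring

end Field

section CommRing

variable {R : Type*} [CommRing R] {d s : R}

lemma numerator_sub_mul_denominator (hs : s ^ 2 = d) (μ z : R) :
    (s * μ * z ^ 2 - 2 * d * z + d * s * μ) - s * (z ^ 2 - 2 * s * μ * z + d)
      = s * (μ - 1) * (z + s) ^ 2 := by
  subst hs; ring

lemma numerator_add_mul_denominator (hs : s ^ 2 = d) (μ z : R) :
    (s * μ * z ^ 2 - 2 * d * z + d * s * μ) + s * (z ^ 2 - 2 * s * μ * z + d)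
      = s * (μ + 1) * (z - s) ^ 2 := by
  subst hs; ring

end CommRing

theorem stmt11_general (L : Type*) [Field L]
    (d s α : L) (hs : s ^ 2 = d) (hα3 : α ^ 3 ≠ 1)
    (μ : L) (hμ : μ = (α ^ 3 + 1) / (α ^ 3 - 1)) :
    ∀ z : L, z + s ≠ 0 → z - s ≠ 0 →
      z ^ 2 - 2 * s * μ * z + d ≠ 0 →
      (s * μ * z ^ 2 - 2 * d * z + d * s * μ) / (z ^ 2 - 2 * s * μ * z + d) + s ≠ 0 →
      α * ((s * μ * z ^ 2 - 2 * d * z + d * s * μ) / (z ^ 2 - 2 * s * μ * z + d) - s)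
          / ((s * μ * z ^ 2 - 2 * d * z + d * s * μ) / (z ^ 2 - 2 * s * μ * z + d) + s)
        = 1 / (α * (z - s) / (z + s)) ^ 2 := by
  intro z _ hzs hQ hNQ
  have hμ' := add_one_eq_mul_sub_one_of_eq_div hα3 hμ
  rw [mul_div_sub_div_add_eq hQ, numerator_sub_mul_denominator hs,
    numerator_add_mul_denominator hs, hμ']
  -- the denominator of `g (N / Q)` being nonzero is what rules out `s`, `α` or `μ - 1` vanishing
  rw [div_add' _ _ _ hQ, numerator_add_mul_denominator hs, hμ', div_ne_zero_iff] at hNQ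
  obtain ⟨hs0, hα0, hμ1⟩ : s ≠ 0 ∧ α ≠ 0 ∧ μ - 1 ≠ 0 := by
    simpa only [mul_ne_zero_iff, pow_ne_zero_iff three_ne_zero] using left_ne_zero_of_mul hNQ.1
  field_simp

/-- Conjugating φ(z) = 1/z² by g(z) = α(z - √d)/(z + √d) yields the map
(√d·μ·z² - 2dz + d√d·μ)/(z² - 2√d·μ·z + d) with μ = (α³+1)/(α³-1):
pointwise, g applied to the latter map equals 1/(g z)². -/
theorem stmt11 (L : Type*) [Field L] (h2 : (2 : L) ≠ 0) (h3 : (3 : L) ≠ 0)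
    (d s α : L) (hd : d ≠ 0) (hs : s ^ 2 = d) (hα : α ≠ 0) (hα3 : α ^ 3 ≠ 1)
    (μ : L) (hμ : μ = (α ^ 3 + 1) / (α ^ 3 - 1)) :
    ∀ z : L, z + s ≠ 0 → z - s ≠ 0 →
      z ^ 2 - 2 * s * μ * z + d ≠ 0 →
      (s * μ * z ^ 2 - 2 * d * z + d * s * μ) / (z ^ 2 - 2 * s * μ * z + d) + s ≠ 0 →
      α * ((s * μ * z ^ 2 - 2 * d * z + d * s * μ) / (z ^ 2 - 2 * s * μ * z + d) - s)
          / ((s * μ * z ^ 2 - 2 * d * z + d * s * μ) / (z ^ 2 - 2 * s * μ * z + d) + s)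
        = 1 / (α * (z - s) / (z + s)) ^ 2 :=
  stmt11_general L d s α hs hα3 μ hμ
end

section
/- Let K be a field with char(K) ≠ 2,3 and t, t' ∈ K*. The maps θ_t(z) = t/z² and θ_{t'}(z) = t'/z² are conjugate over K by some h ∈ PGL₂(K) fixing the set {0, ∞} if and only if t/t' ∈ (K*)³ or t·t' ∈ (K*)³. Concretely: conjugation by h(z) = λz sends θ_t to θ_{t'} iff t/t' = λ³, and conjugation by h(z) = λ/z sends θ_t to θ_{t'} iff t·t' = λ³. -/
/-! Conjugating θ_t by `z ↦ λz` or `z ↦ λ/z` gives again a map of the form `c/z²`, and comparing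
the constants at any single point `z ≠ 0` yields the cube condition; the dependence on `z` cancels. -/

section

variable {K : Type*} [Field K] {t t' l z : K}

theorem div_mul_sq_eq_mul_div_sq_iff (hl : l ≠ 0) (ht' : t' ≠ 0) (hz : z ≠ 0) :
    t / (l * z) ^ 2 = l * (t' / z ^ 2) ↔ t / t' = l ^ 3 := by
  rw [div_eq_iff (by positivity), div_eq_iff ht']
  constructor <;> intro h
  · field_simp at h
    linear_combination h
  · field_simp
    linear_combination h

theorem div_div_sq_eq_div_div_sq_iff (hl : l ≠ 0) (ht' : t' ≠ 0) (hz : z ≠ 0) :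
    t / (l / z) ^ 2 = l / (t' / z ^ 2) ↔ t * t' = l ^ 3 := by
  constructor <;> intro h
  · field_simp at h
    linear_combination h
  · field_simp
    linear_combination h

theorem forall_ne_zero_iff_of_iff {P : K → Prop} {Q : Prop} (hPQ : ∀ z, z ≠ 0 → (P z ↔ Q)) :
    (∀ z, z ≠ 0 → P z) ↔ Q :=
  ⟨fun h => (hPQ 1 one_ne_zero).1 (h 1 one_ne_zero), fun hQ z hz => (hPQ z hz).2 hQ⟩

end

theorem stmt13_general (K : Type*) [Field K]
    (t t' : K) (ht' : t' ≠ 0) :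
    (((∃ l : K, l ≠ 0 ∧ ∀ z : K, z ≠ 0 → t / (l * z) ^ 2 = l * (t' / z ^ 2)) ∨
        (∃ l : K, l ≠ 0 ∧ ∀ z : K, z ≠ 0 → t / (l / z) ^ 2 = l / (t' / z ^ 2))) ↔
      ((∃ l : K, l ≠ 0 ∧ t / t' = l ^ 3) ∨ (∃ l : K, l ≠ 0 ∧ t * t' = l ^ 3))) ∧
    (∀ l : K, l ≠ 0 →
      ((∀ z : K, z ≠ 0 → t / (l * z) ^ 2 = l * (t' / z ^ 2)) ↔ t / t' = l ^ 3)) ∧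
    (∀ l : K, l ≠ 0 →
      ((∀ z : K, z ≠ 0 → t / (l / z) ^ 2 = l / (t' / z ^ 2)) ↔ t * t' = l ^ 3)) := by
  have scaling (l : K) (hl : l ≠ 0) := forall_ne_zero_iff_of_iff fun z hz =>
    div_mul_sq_eq_mul_div_sq_iff (t := t) hl ht' hz
  have inversion (l : K) (hl : l ≠ 0) := forall_ne_zero_iff_of_iff fun z hz =>
    div_div_sq_eq_div_div_sq_iff (t := t) hl ht' hz
  refine ⟨?_, scaling, inversion⟩
  exact or_congr (exists_congr fun l => and_congr_right (scaling l))
    (exists_congr fun l => and_congr_right (inversion l))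

/-- θ_t(z) = t/z² and θ_{t'}(z) = t'/z² are conjugate over K by a Möbius map
fixing {0, ∞} (necessarily of the form λz or λ/z) iff t/t' or t·t' is a cube in
K*.  Concretely, conjugation by λz works iff t/t' = λ³ and conjugation by λ/z
works iff t·t' = λ³. -/
theorem stmt13 (K : Type*) [Field K] (h2 : (2 : K) ≠ 0) (h3 : (3 : K) ≠ 0)
    (t t' : K) (ht : t ≠ 0) (ht' : t' ≠ 0) :
    (((∃ l : K, l ≠ 0 ∧ ∀ z : K, z ≠ 0 → t / (l * z) ^ 2 = l * (t' / z ^ 2)) ∨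
        (∃ l : K, l ≠ 0 ∧ ∀ z : K, z ≠ 0 → t / (l / z) ^ 2 = l / (t' / z ^ 2))) ↔
      ((∃ l : K, l ≠ 0 ∧ t / t' = l ^ 3) ∨ (∃ l : K, l ≠ 0 ∧ t * t' = l ^ 3))) ∧
    (∀ l : K, l ≠ 0 →
      ((∀ z : K, z ≠ 0 → t / (l * z) ^ 2 = l * (t' / z ^ 2)) ↔ t / t' = l ^ 3)) ∧
    (∀ l : K, l ≠ 0 →
      ((∀ z : K, z ≠ 0 → t / (l / z) ^ 2 = l / (t' / z ^ 2)) ↔ t * t' = l ^ 3)) :=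
  stmt13_general K t t' ht'
end

section
/- Let K be a field with char(K) ≠ 2,3, d ∈ K*, k ∈ K with k ≠ 0 and k² ≠ d. Conjugating θ_{d,k}(z) = (kz² - 2dz + dk)/(z² - 2kz + d) by h represented by the matrix [[0, -bd],[−1, 0]] (i.e., h(z) = bd/z) for b ∈ K* yields θ_{b²d, bd/k}. -/
/-- Conjugating θ_{d,k} by h(z) = bd/z yields θ_{b²d, bd/k}:
pointwise θ_{d,k}(bd/z) = bd / θ_{b²d, bd/k}(z). -/
theorem stmt14 (K : Type*) [Field K] (h2 : (2 : K) ≠ 0) (h3 : (3 : K) ≠ 0)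
    (d k b : K) (hd : d ≠ 0) (hk : k ≠ 0) (hkd : k ^ 2 ≠ d) (hb : b ≠ 0) :
    ∀ z : K, z ≠ 0 →
      (b * d / z) ^ 2 - 2 * k * (b * d / z) + d ≠ 0 →
      z ^ 2 - 2 * (b * d / k) * z + b ^ 2 * d ≠ 0 →
      ((b * d / k) * z ^ 2 - 2 * (b ^ 2 * d) * z + (b ^ 2 * d) * (b * d / k))
          / (z ^ 2 - 2 * (b * d / k) * z + b ^ 2 * d) ≠ 0 →
      (k * (b * d / z) ^ 2 - 2 * d * (b * d / z) + d * k)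
          / ((b * d / z) ^ 2 - 2 * k * (b * d / z) + d)
        = b * d /
          (((b * d / k) * z ^ 2 - 2 * (b ^ 2 * d) * z + (b ^ 2 * d) * (b * d / k))
            / (z ^ 2 - 2 * (b * d / k) * z + b ^ 2 * d)) := by
  intro z hz h1 h4 h5
  have hnum : (b * d / k) * z ^ 2 - 2 * (b ^ 2 * d) * z + (b ^ 2 * d) * (b * d / k) ≠ 0 := by
    intro h; exact h5 (by rw [h, zero_div])
  rw [div_div_eq_mul_div, div_eq_div_iff h1 hnum]
  field_simp
  ring
end

section
/- Let K be a field with char(K) ≠ 2,3, d ∈ K*, k ∈ K with k² ≠ d, b ∈ K*, and γ ∈ K such that dkγ³ + 3dγ² + 3kγ + 1 ≠ 0. Let h be the Möbius transformation represented by the matrix [[1, -bdγ], [-γ, b]]. Then h⁻¹ ∘ θ_{d,k} ∘ h = θ_{b²d, k'}, where k' = b(d²γ³ + 3dkγ² + 3dγ + k)/(dkγ³ + 3dγ² + 3kγ + 1). -/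
/-!
In homogeneous coordinates `θ_{d,k}` is the pair of binary quadratic forms
`Θ_{d,k} = (k X² - 2d XY + dk Y², X² - 2k XY + d Y²)` and `h` is the matrix `M = [[1, -bdγ], [-γ, b]]`.
With `E = dkγ³ + 3dγ² + 3kγ + 1` the conjugacy is the identity of pairs of forms
`b (1 - dγ²) · Θ_{d,k}(M v) = E · M Θ_{b²d,k'}(v)`, which becomes polynomial once `k' E` is replaced
by `b (d²γ³ + 3dkγ² + 3dγ + k)`. As `E ≠ 0`, both sides define the same point of `ℙ¹`.
-/

namespace ThetaNormalForm

variable {K : Type*} [Field K]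

def thetaNum (d k x : K) : K := k * x ^ 2 - 2 * d * x + d * k

def thetaDen (d k x : K) : K := x ^ 2 - 2 * k * x + d

def thetaNumHom (d k x y : K) : K := k * x ^ 2 - 2 * d * x * y + d * k * y ^ 2

def thetaDenHom (d k x y : K) : K := x ^ 2 - 2 * k * x * y + d * y ^ 2

theorem thetaNum_div {y : K} (hy : y ≠ 0) (d k x : K) :
    thetaNum d k (x / y) = thetaNumHom d k x y / y ^ 2 := by
  unfold thetaNum thetaNumHom
  field_simp

theorem thetaDen_div {y : K} (hy : y ≠ 0) (d k x : K) :
    thetaDen d k (x / y) = thetaDenHom d k x y / y ^ 2 := by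
  unfold thetaDen thetaDenHom
  field_simp

theorem theta_div {y : K} (hy : y ≠ 0) (d k x : K) :
    thetaNum d k (x / y) / thetaDen d k (x / y) = thetaNumHom d k x y / thetaDenHom d k x y := by
  rw [thetaNum_div hy, thetaDen_div hy, div_div_div_cancel_right₀ (pow_ne_zero 2 hy)]

theorem mul_div_add_eq {y : K} (hy : y ≠ 0) (r s x : K) :
    r * (x / y) + s = (r * x + s * y) / y := by
  field_simp

theorem moebius_div {y : K} (hy : y ≠ 0) (q r s x : K) :
    (x / y - q) / (r * (x / y) + s) = (x - q * y) / (r * x + s * y) := by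
  rw [mul_div_add_eq hy, ← div_div_div_cancel_right₀ hy (x - q * y)]
  congr 1
  field_simp

theorem div_eq_div_of_proportional {a b p q c e : K} (he : e ≠ 0) (hq : q ≠ 0)
    (ha : c * a = e * p) (hb : c * b = e * q) : a / b = p / q := by
  have hcb : c * b ≠ 0 := hb ▸ mul_ne_zero he hq
  rw [div_eq_div_iff (right_ne_zero_of_mul hcb) hq]
  apply mul_left_cancel₀ (left_ne_zero_of_mul hcb)
  linear_combination q * ha - p * hb

section Conjugacy

variable {d k b γ k' : K}

theorem thetaNumHom_conj
    (hk' : k' * (d * k * γ ^ 3 + 3 * d * γ ^ 2 + 3 * k * γ + 1)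
      = b * (d ^ 2 * γ ^ 3 + 3 * d * k * γ ^ 2 + 3 * d * γ + k)) (z : K) :
    b * (1 - d * γ ^ 2) * thetaNumHom d k (z - b * d * γ) (-γ * z + b)
      = (d * k * γ ^ 3 + 3 * d * γ ^ 2 + 3 * k * γ + 1)
        * (thetaNum (b ^ 2 * d) k' z - b * d * γ * thetaDen (b ^ 2 * d) k' z) := by
  unfold thetaNumHom thetaNum thetaDen
  linear_combination (-(z ^ 2 + 2 * b * d * γ * z + b ^ 2 * d)) * hk'

theorem thetaDenHom_conj
    (hk' : k' * (d * k * γ ^ 3 + 3 * d * γ ^ 2 + 3 * k * γ + 1)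
      = b * (d ^ 2 * γ ^ 3 + 3 * d * k * γ ^ 2 + 3 * d * γ + k)) (z : K) :
    b * (1 - d * γ ^ 2) * thetaDenHom d k (z - b * d * γ) (-γ * z + b)
      = (d * k * γ ^ 3 + 3 * d * γ ^ 2 + 3 * k * γ + 1)
        * (-γ * thetaNum (b ^ 2 * d) k' z + b * thetaDen (b ^ 2 * d) k' z) := by
  unfold thetaDenHom thetaNum thetaDen
  linear_combination (γ * (z ^ 2 + b ^ 2 * d) + 2 * b * z) * hk'

end Conjugacy

end ThetaNormalForm

open ThetaNormalForm

theorem stmt15_general (K : Type*) [Field K]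
    (d k b γ : K)
    (hγ : d * k * γ ^ 3 + 3 * d * γ ^ 2 + 3 * k * γ + 1 ≠ 0)
    (k' : K)
    (hk' : k' = b * (d ^ 2 * γ ^ 3 + 3 * d * k * γ ^ 2 + 3 * d * γ + k)
      / (d * k * γ ^ 3 + 3 * d * γ ^ 2 + 3 * k * γ + 1)) :
    ∀ z : K, -γ * z + b ≠ 0 →
      ((z - b * d * γ) / (-γ * z + b)) ^ 2
          - 2 * k * ((z - b * d * γ) / (-γ * z + b)) + d ≠ 0 →
      z ^ 2 - 2 * k' * z + b ^ 2 * d ≠ 0 →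
      -γ * ((k' * z ^ 2 - 2 * (b ^ 2 * d) * z + (b ^ 2 * d) * k')
          / (z ^ 2 - 2 * k' * z + b ^ 2 * d)) + b ≠ 0 →
      (k * ((z - b * d * γ) / (-γ * z + b)) ^ 2
          - 2 * d * ((z - b * d * γ) / (-γ * z + b)) + d * k)
        / (((z - b * d * γ) / (-γ * z + b)) ^ 2
          - 2 * k * ((z - b * d * γ) / (-γ * z + b)) + d)
      = ((k' * z ^ 2 - 2 * (b ^ 2 * d) * z + (b ^ 2 * d) * k')
            / (z ^ 2 - 2 * k' * z + b ^ 2 * d) - b * d * γ)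
        / (-γ * ((k' * z ^ 2 - 2 * (b ^ 2 * d) * z + (b ^ 2 * d) * k')
            / (z ^ 2 - 2 * k' * z + b ^ 2 * d)) + b) := by
  intro z hB _ (hD : thetaDen (b ^ 2 * d) k' z ≠ 0)
    (hhD : -γ * (thetaNum (b ^ 2 * d) k' z / thetaDen (b ^ 2 * d) k' z) + b ≠ 0)
  change thetaNum d k _ / thetaDen d k _
    = (thetaNum (b ^ 2 * d) k' z / thetaDen (b ^ 2 * d) k' z - b * d * γ)
      / (-γ * (thetaNum (b ^ 2 * d) k' z / thetaDen (b ^ 2 * d) k' z) + b)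
  rw [theta_div hB, moebius_div hD]
  rw [mul_div_add_eq hD] at hhD
  have hk'E := (eq_div_iff hγ).mp hk'
  exact div_eq_div_of_proportional hγ (div_ne_zero_iff.mp hhD).1
    (thetaNumHom_conj hk'E z) (thetaDenHom_conj hk'E z)

/-- Conjugating θ_{d,k} by the Möbius map h(z) = (z - bdγ)/(-γz + b) yields
θ_{b²d, k'} with k' = b(d²γ³ + 3dkγ² + 3dγ + k)/(dkγ³ + 3dγ² + 3kγ + 1):
pointwise θ_{d,k}(h z) = h(θ_{b²d,k'} z). -/
theorem stmt15 (K : Type*) [Field K] (h2 : (2 : K) ≠ 0) (h3 : (3 : K) ≠ 0)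
    (d k b γ : K) (hd : d ≠ 0) (hkd : k ^ 2 ≠ d) (hb : b ≠ 0)
    (hγ : d * k * γ ^ 3 + 3 * d * γ ^ 2 + 3 * k * γ + 1 ≠ 0)
    (k' : K)
    (hk' : k' = b * (d ^ 2 * γ ^ 3 + 3 * d * k * γ ^ 2 + 3 * d * γ + k)
      / (d * k * γ ^ 3 + 3 * d * γ ^ 2 + 3 * k * γ + 1)) :
    ∀ z : K, -γ * z + b ≠ 0 →
      ((z - b * d * γ) / (-γ * z + b)) ^ 2
          - 2 * k * ((z - b * d * γ) / (-γ * z + b)) + d ≠ 0 →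
      z ^ 2 - 2 * k' * z + b ^ 2 * d ≠ 0 →
      -γ * ((k' * z ^ 2 - 2 * (b ^ 2 * d) * z + (b ^ 2 * d) * k')
          / (z ^ 2 - 2 * k' * z + b ^ 2 * d)) + b ≠ 0 →
      (k * ((z - b * d * γ) / (-γ * z + b)) ^ 2
          - 2 * d * ((z - b * d * γ) / (-γ * z + b)) + d * k)
        / (((z - b * d * γ) / (-γ * z + b)) ^ 2
          - 2 * k * ((z - b * d * γ) / (-γ * z + b)) + d)
      = ((k' * z ^ 2 - 2 * (b ^ 2 * d) * z + (b ^ 2 * d) * k')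
            / (z ^ 2 - 2 * k' * z + b ^ 2 * d) - b * d * γ)
        / (-γ * ((k' * z ^ 2 - 2 * (b ^ 2 * d) * z + (b ^ 2 * d) * k')
            / (z ^ 2 - 2 * k' * z + b ^ 2 * d)) + b) :=
  stmt15_general K d k b γ hγ k' hk'
end

section
/- Let K be a field with char(K) ≠ 2,3 and c ∈ K with c ≠ 0. The polynomial map z ↦ z² + c is conjugate over K to the rational map ψ(z) = 2z²/(-z² + 4z - 4c); equivalently, the fixed point multipliers of z² + c are 0 and the two roots λ of λ² - 2λ + 4c = 0 (so they sum to 2 and multiply to 4c), and ψ is the map of Lemma (a) with σ₁ = 2 and σ₂ = 4c. -/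
/-! The normal form ψ(z) = 2z²/(-z² + 4z - 4c) arises from φ(z) = z² + c by moving the
superattracting fixed point ∞ of φ to 0: with h(w) = (w - 2c)/w = 1 - 2c/w one has
h(ψ(z)) = (z² - 4cz + 4c² + cz²)/z² = h(z)² + c. -/

theorem mobius_comp_normalForm_eq_sq_add {K : Type*} [Field K] (h2 : (2 : K) ≠ 0) (c z : K)
    (hz : z ≠ 0) (hden : -z ^ 2 + 4 * z - 4 * c ≠ 0) :
    (2 * z ^ 2 / (-z ^ 2 + 4 * z - 4 * c) - 2 * c) / (2 * z ^ 2 / (-z ^ 2 + 4 * z - 4 * c))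
      = ((z - 2 * c) / z) ^ 2 + c := by
  rw [sub_div, div_self (div_ne_zero (mul_ne_zero h2 (pow_ne_zero 2 hz)) hden),
    div_div_eq_mul_div]
  field_simp
  ring

theorem multiplier_sq_sub_two_mul_add_four_mul_eq_zero {R : Type*} [CommRing R] {c P : R}
    (hP : P ^ 2 + c = P) : (2 * P) ^ 2 - 2 * (2 * P) + 4 * c = 0 := by
  linear_combination 4 * hP

theorem stmt19_general (K : Type*) [Field K] (h2 : (2 : K) ≠ 0)
    (c : K) (hc : c ≠ 0) :
    (∃ a b c₂ d₂ : K, a * d₂ - b * c₂ ≠ 0 ∧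
      ∀ z : K, -z ^ 2 + 4 * z - 4 * c ≠ 0 → c₂ * z + d₂ ≠ 0 →
        c₂ * (2 * z ^ 2 / (-z ^ 2 + 4 * z - 4 * c)) + d₂ ≠ 0 →
        (a * (2 * z ^ 2 / (-z ^ 2 + 4 * z - 4 * c)) + b)
            / (c₂ * (2 * z ^ 2 / (-z ^ 2 + 4 * z - 4 * c)) + d₂)
          = ((a * z + b) / (c₂ * z + d₂)) ^ 2 + c) ∧
    (∀ P : K, P ^ 2 + c = P → (2 * P) ^ 2 - 2 * (2 * P) + 4 * c = 0) := by
  refine ⟨⟨1, -2 * c, 1, 0, by simpa using mul_ne_zero h2 hc, fun z hden hz _ => ?_⟩,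
    fun P => multiplier_sq_sub_two_mul_add_four_mul_eq_zero⟩
  simpa [← sub_eq_add_neg] using mobius_comp_normalForm_eq_sq_add h2 c z (by simpa using hz) hden

/-- For c ≠ 0, the polynomial z² + c is conjugate over K to
ψ(z) = 2z²/(-z² + 4z - 4c): there is a Möbius transformation h over K with
h ∘ ψ = φ ∘ h where φ(z) = z² + c.  Moreover, every finite fixed point P of
z² + c has multiplier 2P satisfying λ² - 2λ + 4c = 0. -/
theorem stmt19 (K : Type*) [Field K] (h2 : (2 : K) ≠ 0) (h3 : (3 : K) ≠ 0)
    (c : K) (hc : c ≠ 0) :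
    (∃ a b c₂ d₂ : K, a * d₂ - b * c₂ ≠ 0 ∧
      ∀ z : K, -z ^ 2 + 4 * z - 4 * c ≠ 0 → c₂ * z + d₂ ≠ 0 →
        c₂ * (2 * z ^ 2 / (-z ^ 2 + 4 * z - 4 * c)) + d₂ ≠ 0 →
        (a * (2 * z ^ 2 / (-z ^ 2 + 4 * z - 4 * c)) + b)
            / (c₂ * (2 * z ^ 2 / (-z ^ 2 + 4 * z - 4 * c)) + d₂)
          = ((a * z + b) / (c₂ * z + d₂)) ^ 2 + c) ∧
    (∀ P : K, P ^ 2 + c = P → (2 * P) ^ 2 - 2 * (2 * P) + 4 * c = 0) :=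
  stmt19_general K h2 c hc
end
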